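/- arXiv:2111.10205 — 3 statements merged into one kernel-verified Lean document; each statement's English description precedes it below -/
import Mathlib

section
/- Let F : ℝⁿ → ℝⁿ, let x : ℝ → ℝⁿ be differentiable with x'(t) = F(x(t)) for all t, let h : ℝⁿ → ℝ be differentiable, and let λ > 0. If for every t ≥ t₀ the derivative of h at x(t) applied to F(x(t)) is at least -λ·h(x(t)), and h(x(t₀)) ≥ 0, then h(x(t)) ≥ 0 for all t ≥ t₀. -/
/-!
The CBF condition `d/dt h(x t) ≥ -λ h(x t)` says exactly that the integrating factor
`t ↦ h(x t) e^{λ t}` is nondecreasing for `t ≥ t₀`; since it starts nonnegative it stays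
nonnegative, and so does `h (x t)`.
-/

open Real Set

section IntegratingFactor

variable {f f' : ℝ → ℝ} {lam t₀ : ℝ}

theorem hasDerivAt_mul_exp_const_mul {t : ℝ} (hf : HasDerivAt f (f' t) t) :
    HasDerivAt (fun s => f s * exp (lam * s)) ((f' t + lam * f t) * exp (lam * t)) t := by
  have hexp : HasDerivAt (fun s => exp (lam * s)) (exp (lam * t) * lam) t :=
    ((hasDerivAt_id t).const_mul lam).exp.congr_deriv (by simp)
  exact (hf.mul hexp).congr_deriv (by ring)

theorem monotoneOn_mul_exp_of_deriv_ge_neg_mul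
    (hf : ∀ t ∈ Ici t₀, HasDerivAt f (f' t) t)
    (hcmp : ∀ t ∈ Ici t₀, -lam * f t ≤ f' t) :
    MonotoneOn (fun s => f s * exp (lam * s)) (Ici t₀) := by
  refine monotoneOn_of_hasDerivWithinAt_nonneg (convex_Ici t₀)
    (fun t ht => (hasDerivAt_mul_exp_const_mul (hf t ht)).continuousAt.continuousWithinAt)
    (fun t ht => (hasDerivAt_mul_exp_const_mul (hf t (interior_subset ht))).hasDerivWithinAt)
    (fun t ht => ?_)
  have ht' := interior_subset ht
  exact mul_nonneg (by linarith [hcmp t ht']) (exp_pos _).le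

theorem nonneg_of_deriv_ge_neg_mul
    (hf : ∀ t ∈ Ici t₀, HasDerivAt f (f' t) t)
    (hcmp : ∀ t ∈ Ici t₀, -lam * f t ≤ f' t) (h0 : 0 ≤ f t₀) {t : ℝ} (ht : t₀ ≤ t) :
    0 ≤ f t := by
  have hmono := monotoneOn_mul_exp_of_deriv_ge_neg_mul hf hcmp self_mem_Ici ht ht
  have : 0 ≤ f t * exp (lam * t) := (mul_nonneg h0 (exp_pos _).le).trans hmono
  exact nonneg_of_mul_nonneg_left this (exp_pos _)

end IntegratingFactor

theorem cbf_forward_invariance_along_trajectory_general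
    (n : ℕ) (F : (Fin n → ℝ) → (Fin n → ℝ)) (x : ℝ → (Fin n → ℝ))
    (hx : Differentiable ℝ x)
    (hode : ∀ t : ℝ, deriv x t = F (x t))
    (h : (Fin n → ℝ) → ℝ) (hh : Differentiable ℝ h)
    (lam : ℝ) (t₀ : ℝ)
    (hcbf : ∀ t, t₀ ≤ t → fderiv ℝ h (x t) (F (x t)) ≥ -lam * h (x t))
    (h0 : 0 ≤ h (x t₀)) :
    ∀ t, t₀ ≤ t → 0 ≤ h (x t) := by
  have hderiv : ∀ t, HasDerivAt (fun s => h (x s)) (fderiv ℝ h (x t) (F (x t))) t := fun t =>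
    (hh (x t)).hasFDerivAt.comp_hasDerivAt t (hode t ▸ (hx t).hasDerivAt)
  exact fun t ht => nonneg_of_deriv_ge_neg_mul (fun s _ => hderiv s) hcbf h0 ht

/-- Forward invariance of the zero superlevel set `{x | h x ≥ 0}` along a solution
of `ẋ = F x` under the CBF condition `L_F h (x t) ≥ -λ * h (x t)`. -/
theorem cbf_forward_invariance_along_trajectory
    (n : ℕ) (F : (Fin n → ℝ) → (Fin n → ℝ)) (x : ℝ → (Fin n → ℝ))
    (hx : Differentiable ℝ x)
    (hode : ∀ t : ℝ, deriv x t = F (x t))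
    (h : (Fin n → ℝ) → ℝ) (hh : Differentiable ℝ h)
    (lam : ℝ) (hlam : 0 < lam) (t₀ : ℝ)
    (hcbf : ∀ t, t₀ ≤ t → fderiv ℝ h (x t) (F (x t)) ≥ -lam * h (x t))
    (h0 : 0 ≤ h (x t₀)) :
    ∀ t, t₀ ≤ t → 0 ≤ h (x t) :=
  cbf_forward_invariance_along_trajectory_general n F x hx hode h hh lam t₀ hcbf h0
end

section
/- Let m > 0, v̄ > 0, let λ₁ ≥ λ₂ > 0, let F_r : ℝ → ℝ satisfy F_r(v) ≥ 0 for all v ∈ [0, v̄], and let u̲ < 0 < ū with ū ≥ F_r(v)/m - λ₁·v for all v ∈ [0, v̄]. Then for every v ∈ [0, v̄] there exists u with u̲ ≤ u ≤ ū such that simultaneously u ≥ F_r(v)/m - λ₁·v and u ≤ F_r(v)/m + λ₂·(v̄ - v). In particular, F_r(v)/m - λ₁·v ≤ F_r(v)/m + λ₂·(v̄ - v) for all v ∈ [0, v̄]. -/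
/-! Each barrier constraint cuts the input box `[u̲, ū]` down by a half-line, `u ≥ F_r(v)/m - λ₁ v`
resp. `u ≤ F_r(v)/m + λ₂ (v̄ - v)`. For `v ∈ [0, v̄]` the first threshold lies below `F_r(v)/m`, which
lies below the second, and the box meets both half-lines because `u̲ < 0 ≤ F_r(v)/m + λ₂ (v̄ - v)` and
`F_r(v)/m - λ₁ v ≤ ū`; four pairwise compatible interval bounds have a common point. -/

theorem Set.Icc_inter_Icc_nonempty_of_le {α : Type*} [Lattice α] {a b c d : α}
    (hab : a ≤ b) (had : a ≤ d) (hcb : c ≤ b) (hcd : c ≤ d) :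
    (Set.Icc a b ∩ Set.Icc c d).Nonempty := by
  rw [Set.Icc_inter_Icc]
  exact Set.nonempty_Icc.2 (sup_le (le_inf hab had) (le_inf hcb hcd))

theorem sub_mul_le_add_mul_sub {a b c v w : ℝ} (ha : 0 ≤ a) (hb : 0 ≤ b)
    (hv : v ∈ Set.Icc 0 w) : c - a * v ≤ c + b * (w - v) := by
  have hav : 0 ≤ a * v := mul_nonneg ha hv.1
  have hbv : 0 ≤ b * (w - v) := mul_nonneg hb (sub_nonneg.2 hv.2)
  linarith

theorem velocity_cbfs_control_sharing_general
    (m vbar lam₁ lam₂ ulo uhi : ℝ) (Fr : ℝ → ℝ)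
    (hm : 0 < m)
    (hlam₂ : 0 < lam₂) (hlam : lam₂ ≤ lam₁)
    (hFrpos : ∀ v ∈ Set.Icc (0 : ℝ) vbar, 0 ≤ Fr v)
    (hulo : ulo < 0) (huhi : 0 < uhi)
    (hufeas : ∀ v ∈ Set.Icc (0 : ℝ) vbar, Fr v / m - lam₁ * v ≤ uhi) :
    (∀ v ∈ Set.Icc (0 : ℝ) vbar,
      ∃ u : ℝ, ulo ≤ u ∧ u ≤ uhi ∧
        Fr v / m - lam₁ * v ≤ u ∧ u ≤ Fr v / m + lam₂ * (vbar - v)) ∧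
    (∀ v ∈ Set.Icc (0 : ℝ) vbar,
      Fr v / m - lam₁ * v ≤ Fr v / m + lam₂ * (vbar - v)) := by
  have thresholds_le : ∀ v ∈ Set.Icc (0 : ℝ) vbar,
      Fr v / m - lam₁ * v ≤ Fr v / m + lam₂ * (vbar - v) := fun v hv =>
    sub_mul_le_add_mul_sub (hlam₂.le.trans hlam) hlam₂.le hv
  refine ⟨fun v hv => ?_, thresholds_le⟩
  have upper_nonneg : 0 ≤ Fr v / m + lam₂ * (vbar - v) :=
    add_nonneg (div_nonneg (hFrpos v hv) hm.le) (mul_nonneg hlam₂.le (sub_nonneg.2 hv.2))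
  obtain ⟨u, ⟨hulo_u, hu_uhi⟩, hlower, hupper⟩ := Set.Icc_inter_Icc_nonempty_of_le
    (hulo.trans huhi).le (hulo.le.trans upper_nonneg) (hufeas v hv) (thresholds_le v hv)
  exact ⟨u, hulo_u, hu_uhi, hlower, hupper⟩

/-- Control-sharing property of the lower and upper velocity-bound CBFs:
when `λ₁ ≥ λ₂ > 0`, for every `v ∈ [0, v̄]` there is a single admissible control
`u ∈ [u̲, ū]` satisfying both CBF constraints simultaneously; in particular the
two constraint thresholds are compatible. -/
theorem velocity_cbfs_control_sharing
    (m vbar lam₁ lam₂ ulo uhi : ℝ) (Fr : ℝ → ℝ)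
    (hm : 0 < m) (hvbar : 0 < vbar)
    (hlam₂ : 0 < lam₂) (hlam : lam₂ ≤ lam₁)
    (hFrpos : ∀ v ∈ Set.Icc (0 : ℝ) vbar, 0 ≤ Fr v)
    (hulo : ulo < 0) (huhi : 0 < uhi)
    (hufeas : ∀ v ∈ Set.Icc (0 : ℝ) vbar, Fr v / m - lam₁ * v ≤ uhi) :
    (∀ v ∈ Set.Icc (0 : ℝ) vbar,
      ∃ u : ℝ, ulo ≤ u ∧ u ≤ uhi ∧
        Fr v / m - lam₁ * v ≤ u ∧ u ≤ Fr v / m + lam₂ * (vbar - v)) ∧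
    (∀ v ∈ Set.Icc (0 : ℝ) vbar,
      Fr v / m - lam₁ * v ≤ Fr v / m + lam₂ * (vbar - v)) :=
  velocity_cbfs_control_sharing_general m vbar lam₁ lam₂ ulo uhi Fr hm hlam₂ hlam hFrpos hulo huhi
    hufeas
end

section
/- Let c ∈ ℝ, b₂ > 0, and b₁ ≤ c. Then for every x ∈ ℝ, c + (1/b₂)·ln(1 + exp((x - b₁)·b₂)) - max{c, x} ≤ (c - b₁) + (ln 2)/b₂. -/
open Real

theorem log_one_add_exp_le_max_add_log_two (t : ℝ) : log (1 + exp t) ≤ max 0 t + log 2 := by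
  have hle : 1 + exp t ≤ 2 * exp (max 0 t) := by
    have h₀ : 1 ≤ exp (max 0 t) := one_le_exp (le_max_left 0 t)
    have ht : exp t ≤ exp (max 0 t) := exp_le_exp.2 (le_max_right 0 t)
    linarith
  calc log (1 + exp t) ≤ log (2 * exp (max 0 t)) := log_le_log (by positivity) hle
    _ = max 0 t + log 2 := by rw [log_mul two_ne_zero (exp_ne_zero _), log_exp, add_comm]

theorem one_div_mul_log_one_add_exp_mul_le {b : ℝ} (hb : 0 < b) (y : ℝ) :
    1 / b * log (1 + exp (y * b)) ≤ max 0 y + log 2 / b := by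
  calc 1 / b * log (1 + exp (y * b)) ≤ 1 / b * (max 0 y * b + log 2) := by
        rw [max_mul_of_nonneg _ _ hb.le, zero_mul]
        gcongr
        exact log_one_add_exp_le_max_add_log_two _
    _ = max 0 y + log 2 / b := by field_simp

/-- Conservatism bound of the smooth maximum approximation: for `b₁ ≤ c`, `b₂ > 0`,
the gap between `c + (1/b₂)·ln(1 + e^((x - b₁)·b₂))` and `max c x` is at most
`(c - b₁) + (ln 2)/b₂` for every `x`. -/
theorem smooth_max_approximation_gap_bound
    (c b₁ b₂ : ℝ) (hb₂ : 0 < b₂) (hb₁ : b₁ ≤ c) :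
    ∀ x : ℝ, c + (1 / b₂) * Real.log (1 + Real.exp ((x - b₁) * b₂)) - max c x ≤
      (c - b₁) + Real.log 2 / b₂ := by
  intro x
  have hsoftplus := one_div_mul_log_one_add_exp_mul_le hb₂ (x - b₁)
  have hmax : max 0 (x - b₁) ≤ max c x - b₁ :=
    max_le (by linarith [le_max_left c x]) (by linarith [le_max_right c x])
  linarith
end
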